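/- Let b be the Erdős–Taylor sequence b₁ = 1, b_{n+1} = a_n b_n + 1, and let p > 0. If ∑_{n≥1} (b_n/b_{n+1})^p = ∞, then G_p(b) = {t ∈ ℝ/ℤ : ∑_n ‖b_n t‖^p < ∞} is trivial, i.e. equals {0}. -/

import Mathlib

/-- `G_p(b)` inside the circle `ℝ/ℤ`; the norm on `AddCircle (1:ℝ)` is the
distance to the nearest integer. -/
noncomputable def Gp (b : ℕ → ℕ) (p : ℝ) : Set (AddCircle (1:ℝ)) :=
  {t | Summable (fun n => ‖b n • t‖ ^ p)}

/-!
From `b_{n+1} t = a_n (b_n t) + t` the triangle inequality gives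
`‖t‖ ≤ ‖b_{n+1} t‖ + a_n ‖b_n t‖`. If `∑ ‖b_n t‖^p < ∞` with `t ≠ 0`, then `‖b_{n+1} t‖ < ‖t‖/2`
for large `n`, hence `‖b_n t‖ ≥ ‖t‖/(2 a_n) ≥ (‖t‖/2) · b_n/b_{n+1}`, and comparison makes
`∑ (b_n/b_{n+1})^p` converge.
-/

lemma norm_le_norm_nsmul_mul_add_one {E : Type*} [SeminormedAddCommGroup E] (k m : ℕ) (t : E) :
    ‖t‖ ≤ ‖(k * m + 1) • t‖ + k * ‖m • t‖ := by
  have ht : t = (k * m + 1) • t - k • (m • t) := by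
    rw [add_nsmul, one_nsmul, mul_nsmul']
    abel
  calc ‖t‖ = ‖(k * m + 1) • t - k • (m • t)‖ := congrArg _ ht
    _ ≤ ‖(k * m + 1) • t‖ + ‖k • (m • t)‖ := norm_sub_le _ _
    _ ≤ ‖(k * m + 1) • t‖ + k * ‖m • t‖ := by gcongr; exact norm_nsmul_le

lemma div_mul_add_one_le_div {k m : ℕ} {x ε : ℝ} (hε : 0 < ε) (h : ε ≤ k * x) :
    (m : ℝ) / ((k * m + 1 : ℕ) : ℝ) ≤ x / ε := by
  have hk : (0 : ℝ) < k := by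
    rcases Nat.eq_zero_or_pos k with rfl | hk
    · simp only [Nat.cast_zero, zero_mul] at h
      linarith
    · exact_mod_cast hk
  have hx : 0 < x := by nlinarith
  rw [div_le_div_iff₀ (by positivity) hε]
  push_cast
  nlinarith [(Nat.cast_nonneg m : (0 : ℝ) ≤ m)]

lemma eventually_norm_lt_of_summable_rpow {E : Type*} [SeminormedAddCommGroup E] {f : ℕ → E}
    {p δ : ℝ} (hp : 0 < p) (hδ : 0 < δ) (hf : Summable (fun n => ‖f n‖ ^ p)) : ∀ᶠ n in Filter.atTop, ‖f n‖ < δ := by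
  filter_upwards [hf.tendsto_atTop_zero.eventually_lt_const (Real.rpow_pos_of_pos hδ p)] with n hn
  exact (Real.rpow_lt_rpow_iff (norm_nonneg _) hδ.le hp).1 hn

theorem summable_ratio_rpow_of_summable_norm_nsmul_rpow {E : Type*} [NormedAddCommGroup E]
    {a b : ℕ → ℕ} (hrec : ∀ n, b (n + 1) = a n * b n + 1) {p : ℝ} (hp : 0 < p) {t : E}
    (ht : t ≠ 0) (hsum : Summable (fun n => ‖b n • t‖ ^ p)) :
    Summable (fun n => ((b n : ℝ) / (b (n + 1) : ℝ)) ^ p) := by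
  have hε : 0 < ‖t‖ := norm_pos_iff.mpr ht
  have hsmall : ∀ᶠ n in Filter.atTop, ‖b n • t‖ < ‖t‖ / 2 :=
    eventually_norm_lt_of_summable_rpow (f := fun n => b n • t) hp (half_pos hε) hsum
  refine (hsum.div_const ((‖t‖ / 2) ^ p)).of_norm_bounded_eventually_nat ?_
  filter_upwards [Filter.tendsto_add_atTop_nat 1 hsmall] with n (hn : ‖b (n + 1) • t‖ < ‖t‖ / 2)
  have hlarge : ‖t‖ / 2 ≤ a n * ‖b n • t‖ := by
    have := norm_le_norm_nsmul_mul_add_one (a n) (b n) t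
    rw [← hrec] at this
    linarith
  have hratio : (b n : ℝ) / (b (n + 1) : ℝ) ≤ ‖b n • t‖ / (‖t‖ / 2) := by
    rw [hrec]
    exact div_mul_add_one_le_div (half_pos hε) hlarge
  rw [Real.norm_of_nonneg (by positivity), ← Real.div_rpow (norm_nonneg _) (half_pos hε).le]
  gcongr

theorem stmt9_general (a b : ℕ → ℕ)
    (hrec : ∀ n, 1 ≤ n → b (n + 1) = a n * b n + 1)
    (p : ℝ) (hp : 0 < p)
    (hdiv : ¬ Summable (fun n => ((b (n + 1) : ℝ) / (b (n + 2) : ℝ)) ^ p)) :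
    Gp b p = {0} := by
  ext t
  refine ⟨fun hsum => ?_, ?_⟩
  · by_contra ht
    exact hdiv <| summable_ratio_rpow_of_summable_norm_nsmul_rpow (a := fun n => a (n + 1))
      (fun n => hrec (n + 1) n.succ_pos) hp ht ((summable_nat_add_iff 1).2 hsum)
  · rintro rfl
    simp [Gp, Real.zero_rpow hp.ne']

/-- For an Erdős–Taylor sequence `b₁ = 1`, `bₙ₊₁ = aₙ bₙ + 1`:
if `∑ₙ (bₙ/bₙ₊₁)ᵖ = ∞` then `G_p(b) = {0}`. -/
theorem stmt9 (a b : ℕ → ℕ) (ha : ∀ n, 1 ≤ a n)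
    (hb1 : b 1 = 1) (hrec : ∀ n, 1 ≤ n → b (n + 1) = a n * b n + 1)
    (p : ℝ) (hp : 0 < p)
    (hdiv : ¬ Summable (fun n => ((b (n + 1) : ℝ) / (b (n + 2) : ℝ)) ^ p)) :
    Gp b p = {0} :=
  stmt9_general a b hrec p hp hdiv
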